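/- arXiv:1109.1881 — 3 statements merged into one kernel-verified Lean document; each statement's English description precedes it below -/
import Mathlib

section
/- Let c₂, δ, x be real numbers with c₂ > 0 and δ ≥ 0, and suppose that P(α) := α²(3δ − x) + α(x − 2δ) + c₂ ≥ 0 for all α ∈ [0,1]. If δ ≥ 3c₂, then x ≥ 0. -/
theorem stmt_0_general (c₂ δ x : ℝ)
    (hP : ∀ α : ℝ, 0 ≤ α → α ≤ 1 → α ^ 2 * (3 * δ - x) + α * (x - 2 * δ) + c₂ ≥ 0)
    (h : δ ≥ 3 * c₂) : x ≥ 0 := by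
  -- P(1/3) = 2x/9 - (δ - 3c₂)/3
  have hP_third := hP (1 / 3) (by norm_num) (by norm_num)
  linarith

/-- Numerical core of Proposition 3.5: if `P(α) = α²(3δ − x) + α(x − 2δ) + c₂ ≥ 0`
for all `α ∈ [0,1]`, `c₂ > 0`, `δ ≥ 0` and `δ ≥ 3c₂`, then `x ≥ 0`. -/
theorem stmt_0 (c₂ δ x : ℝ) (hc₂ : c₂ > 0) (hδ : δ ≥ 0)
    (hP : ∀ α : ℝ, 0 ≤ α → α ≤ 1 → α ^ 2 * (3 * δ - x) + α * (x - 2 * δ) + c₂ ≥ 0)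
    (h : δ ≥ 3 * c₂) : x ≥ 0 :=
  stmt_0_general c₂ δ x hP h
end

section
/- Let c₂, δ, x be real numbers with c₂ > 0 and δ ≥ 0, and suppose that P(α) := α²(3δ − x) + α(x − 2δ) + c₂ ≥ 0 for all α ∈ [0,1]. If x < 0, then δ < 3c₂ and x ≥ 2(δ − 3c₂) ≥ −6c₂. -/
theorem stmt_1_general (c₂ δ x : ℝ) (hδ : δ ≥ 0)
    (hP : ∀ α : ℝ, 0 ≤ α → α ≤ 1 → α ^ 2 * (3 * δ - x) + α * (x - 2 * δ) + c₂ ≥ 0)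
    (hx : x < 0) :
    δ < 3 * c₂ ∧ x ≥ 2 * (δ - 3 * c₂) ∧ 2 * (δ - 3 * c₂) ≥ -6 * c₂ := by
  -- `P(1/3) = c₂ + (2x − 3δ)/9`, so `3δ − 9c₂ ≤ 2x < 0`; and `(3δ − 9c₂)/2 ≥ 2(δ − 3c₂)` once `δ ≤ 3c₂`.
  have hP_third := hP (1 / 3) (by norm_num) (by norm_num)
  have hδ_lt : δ < 3 * c₂ := by linarith
  exact ⟨hδ_lt, by linarith, by linarith⟩

/-- Numerical core of Proposition 3.5: if `P(α) = α²(3δ − x) + α(x − 2δ) + c₂ ≥ 0`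
for all `α ∈ [0,1]`, `c₂ > 0`, `δ ≥ 0` and `x < 0`, then
`δ < 3c₂` and `x ≥ 2(δ − 3c₂) ≥ −6c₂`. -/
theorem stmt_1 (c₂ δ x : ℝ) (hc₂ : c₂ > 0) (hδ : δ ≥ 0)
    (hP : ∀ α : ℝ, 0 ≤ α → α ≤ 1 → α ^ 2 * (3 * δ - x) + α * (x - 2 * δ) + c₂ ≥ 0)
    (hx : x < 0) :
    δ < 3 * c₂ ∧ x ≥ 2 * (δ - 3 * c₂) ∧ 2 * (δ - 3 * c₂) ≥ -6 * c₂ :=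
  stmt_1_general c₂ δ x hδ hP hx
end

section
/- Let c₂, δ, x be real numbers with c₂ > 0 and δ ≥ 0, and suppose that P(α) := α²(3δ − x) + α(x − 2δ) + c₂ ≥ 0 for all α ∈ [0,1]. Then x ≥ 2δ − 2c₂ − 2√(c₂² + δc₂). -/
/-!
Only the case `2δ − x > 2c₂` needs an argument. There `P(0) = c₂ ≥ 0` and `P(1) = δ + c₂ ≥ 0`
make the leading coefficient `3δ − x` exceed `(2δ − x)/2`, so the vertex of `P` lies in `[0,1]`.
Nonnegativity of `P` at its vertex says the discriminant is nonpositive, i.e.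
`((2δ − x)/2 − c₂)² ≤ c₂² + δc₂`, which is the claimed bound.
-/

theorem discrim_nonpos_of_nonneg_at_vertex {a b c : ℝ} (ha : 0 < a)
    (h : 0 ≤ a * (-b / (2 * a) * (-b / (2 * a))) + b * (-b / (2 * a)) + c) :
    discrim a b c ≤ 0 := by
  have hvertex : a * (-b / (2 * a) * (-b / (2 * a))) + b * (-b / (2 * a)) + c =
      -discrim a b c / (4 * a) := by
    rw [discrim]
    field_simp
    ring
  rw [hvertex, le_div_iff₀ (by positivity)] at h
  linarith

theorem stmt_3_general (c₂ δ x : ℝ)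
    (hP : ∀ α : ℝ, 0 ≤ α → α ≤ 1 → α ^ 2 * (3 * δ - x) + α * (x - 2 * δ) + c₂ ≥ 0) :
    x ≥ 2 * δ - 2 * c₂ - 2 * Real.sqrt (c₂ ^ 2 + δ * c₂) := by
  have hc₂ : 0 ≤ c₂ := by simpa using hP 0 le_rfl zero_le_one
  have hδc₂ : 0 ≤ δ + c₂ := by linarith [hP 1 zero_le_one le_rfl]
  by_cases hsmall : 2 * δ - x ≤ 2 * c₂
  · linarith [Real.sqrt_nonneg (c₂ ^ 2 + δ * c₂)]
  push Not at hsmall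
  have ha : 0 < 3 * δ - x := by linarith
  have hvertex_nonneg : 0 ≤ -(x - 2 * δ) / (2 * (3 * δ - x)) :=
    div_nonneg (by linarith) (by linarith)
  have hvertex_le_one : -(x - 2 * δ) / (2 * (3 * δ - x)) ≤ 1 :=
    (div_le_one (by linarith)).2 (by linarith)
  have hdisc := discrim_nonpos_of_nonneg_at_vertex (b := x - 2 * δ) (c := c₂) ha
    (by linarith [hP _ hvertex_nonneg hvertex_le_one])
  rw [discrim] at hdisc
  have hroot := Real.abs_le_sqrt
    (show ((2 * δ - x) / 2 - c₂) ^ 2 ≤ c₂ ^ 2 + δ * c₂ by linarith)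
  linarith [le_abs_self ((2 * δ - x) / 2 - c₂)]

/-- Unconditional lower bound from the proof of Proposition 3.5: if
`P(α) = α²(3δ − x) + α(x − 2δ) + c₂ ≥ 0` for all `α ∈ [0,1]`, `c₂ > 0`, `δ ≥ 0`,
then `x ≥ 2δ − 2c₂ − 2√(c₂² + δc₂)`. -/
theorem stmt_3 (c₂ δ x : ℝ) (hc₂ : c₂ > 0) (hδ : δ ≥ 0)
    (hP : ∀ α : ℝ, 0 ≤ α → α ≤ 1 → α ^ 2 * (3 * δ - x) + α * (x - 2 * δ) + c₂ ≥ 0) :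
    x ≥ 2 * δ - 2 * c₂ - 2 * Real.sqrt (c₂ ^ 2 + δ * c₂) :=
  stmt_3_general c₂ δ x hP
end
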